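/- Fix n, k with 0 < k ≤ n and define the shift I[1] of a k-subset I of {0,…,n−1} by I[1] := min{ I_i^{l−1} : I ≤ I_i^l, 1 ≤ l ≤ min(k,i) } (componentwise minimum over the indicated collection). Then for all k-subsets I, J: min{I, J}[1] = min{ I[1], J[1] }, and for the special subsets one has I_{i_0}^{l_0}[1] = I_{i_0}^{l_0 − 1} for all 0 < l_0 ≤ min{k, i_0}. -/

import Mathlib

attribute [local instance] Classical.propDecidable

/-- The sorted list of elements of a finset of naturals, in increasing order. -/
def sortedList (I : Finset ℕ) : List ℕ := I.sort (· ≤ ·)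

/-- The componentwise partial order on finsets of naturals. -/
def fle (I J : Finset ℕ) : Prop := List.Forall₂ (· ≤ ·) (sortedList I) (sortedList J)

/-- The componentwise minimum of two finsets of naturals. -/
def fmin (I J : Finset ℕ) : Finset ℕ :=
  (List.zipWith min (sortedList I) (sortedList J)).toFinset

/-- The special `k`-subsets `I_i^l` of `{0, …, n-1}`. -/
def Iil (n k i l : ℕ) : Finset ℕ :=
  if i + k < n + l then Finset.Ico (i - l) i ∪ Finset.Ico (n - k + l) n
  else Finset.Ico (n - k) n

/-- The shift `I[1]`: the componentwise minimum of the collection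
`{I_i^{l-1} : I ≤ I_i^l, 1 ≤ l ≤ min(k,i)}` (computed by folding the componentwise minimum
over this finite collection, starting from the top `k`-subset `{n-k,…,n-1}`). -/
noncomputable def shift (n k : ℕ) (I : Finset ℕ) : Finset ℕ :=
  (((Finset.range n ×ˢ Finset.range (k + 1)).filter
      (fun p => 1 ≤ p.2 ∧ p.2 ≤ min k p.1 ∧ fle I (Iil n k p.1 p.2))).toList).foldr
    (fun p acc => fmin (Iil n k p.1 (p.2 - 1)) acc) (Finset.Ico (n - k) n)

/-!
Write `I(m)` for the `m`-th smallest element of `I`, so that `I ≤ J` means `I(m) ≤ J(m)` for all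
`m` and `min{I, J}(m) = min{I(m), J(m)}`. Then `I[1](m)` is the minimum of the `I_i^{l-1}(m)` over
the pairs `(i, l)` indexing `I[1]`. Since `I ≤ I_i^l` iff `I(l-1) < i`, the index set of `min{I, J}`
is the union of those of `I` and `J`, which gives the first identity. For `I = I_{i₀}^{l₀}` the
pair `(i₀, l₀)` is itself an index, so `I[1] ≤ I_{i₀}^{l₀-1}`; conversely `I_{i₀}^{l₀} ≤ I_i^l`
forces `I_{i₀}^{l₀-1} ≤ I_i^{l-1}`.
-/

lemma Finset.foldr_toList_eq_fold {α β : Type*} (op : β → β → β) [Std.Commutative op]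
    [Std.Associative op] (s : Finset α) (f : α → β) (b : β) :
    s.toList.foldr (fun a acc => op (f a) acc) b = s.fold op b f := by
  rw [Finset.fold, ← Finset.coe_toList, Multiset.map_coe, Multiset.coe_fold_r, List.foldr_map]

lemma Finset.fold_min_union {α β : Type*} [DecidableEq α] [LinearOrder β] (s t : Finset α)
    (f : α → β) (b : β) : (s ∪ t).fold min b f = min (s.fold min b f) (t.fold min b f) :=
  eq_of_forall_le_iff fun c => by
    simp only [Finset.le_fold_min, le_min_iff, Finset.mem_union, or_imp, forall_and]
    tauto

/-- The `m`-th smallest element of `I`, counting from `0`; it is `0` once `m ≥ #I`. -/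
def sortedNth (I : Finset ℕ) (m : ℕ) : ℕ := (sortedList I).getD m 0

section SortedNth

variable {I J : Finset ℕ} {a b m n : ℕ}

lemma length_sortedList (I : Finset ℕ) : (sortedList I).length = I.card :=
  Finset.length_sort _

lemma pairwise_lt_sortedList (I : Finset ℕ) : (sortedList I).Pairwise (· < ·) :=
  (Finset.sortedLT_sort I).pairwise

lemma sortedList_toFinset {l : List ℕ} (hl : l.Pairwise (· < ·)) : sortedList l.toFinset = l :=
  (List.toFinset_sort _ hl.nodup).mpr (hl.imp le_of_lt)

lemma sortedNth_eq_getElem (hm : m < (sortedList I).length) :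
    sortedNth I m = (sortedList I)[m] :=
  List.getD_eq_getElem _ _ hm

lemma sortedNth_mem (hm : m < I.card) : sortedNth I m ∈ I := by
  rw [← length_sortedList] at hm
  rw [sortedNth_eq_getElem hm, ← Finset.mem_sort (· ≤ ·)]
  exact List.getElem_mem hm

lemma sortedNth_lt_sortedNth (hab : a < b) (hb : b < I.card) : sortedNth I a < sortedNth I b := by
  rw [← length_sortedList] at hb
  rw [sortedNth_eq_getElem (hab.trans hb), sortedNth_eq_getElem hb]
  exact List.pairwise_iff_getElem.mp (pairwise_lt_sortedList I) a b _ hb hab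

lemma sortedNth_add_le (h : a + b < I.card) : sortedNth I a + b ≤ sortedNth I (a + b) := by
  induction b with
  | zero => rfl
  | succ b ih =>
    have hstep := sortedNth_lt_sortedNth (I := I) (a := a + b) (b := a + (b + 1)) (by omega) h
    have := ih (by omega)
    omega

lemma sortedNth_add_card_sub_le (hI : I ⊆ Finset.range n) (hm : m < I.card) :
    sortedNth I m + (I.card - m) ≤ n := by
  have hlast := sortedNth_add_le (I := I) (a := m) (b := I.card - 1 - m) (by omega)
  have hlt := Finset.mem_range.mp
    (hI (sortedNth_mem (I := I) (m := m + (I.card - 1 - m)) (by omega)))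
  omega

lemma fle_iff_sortedNth :
    fle I J ↔ I.card = J.card ∧ ∀ m < I.card, sortedNth I m ≤ sortedNth J m := by
  simp only [fle, List.forall₂_iff_get, List.get_eq_getElem, length_sortedList]
  refine and_congr_right fun hcard => forall_congr' fun m => ?_
  constructor
  · intro h hm
    rw [sortedNth_eq_getElem (by rwa [length_sortedList]),
      sortedNth_eq_getElem (by rwa [length_sortedList, ← hcard])]
    exact h hm (hcard ▸ hm)
  · intro h hI hJ
    rw [← sortedNth_eq_getElem, ← sortedNth_eq_getElem]
    exact h hI

lemma fle_refl (I : Finset ℕ) : fle I I :=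
  List.forall₂_same.mpr fun x _ => le_refl x

lemma eq_of_sortedNth_eq (hcard : I.card = J.card)
    (h : ∀ m < I.card, sortedNth I m = sortedNth J m) : I = J := by
  have hsorted : sortedList I = sortedList J := by
    refine List.ext_getElem (by rw [length_sortedList, length_sortedList, hcard]) fun m hI hJ => ?_
    rw [← sortedNth_eq_getElem, ← sortedNth_eq_getElem]
    exact h m (by rwa [length_sortedList] at hI)
  simpa only [sortedList, Finset.sort_toFinset] using congrArg List.toFinset hsorted

lemma sortedList_fmin (I J : Finset ℕ) :
    sortedList (fmin I J) = List.zipWith min (sortedList I) (sortedList J) := by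
  refine sortedList_toFinset (List.pairwise_iff_getElem.mpr fun a b ha hb hab => ?_)
  simp only [List.length_zipWith, lt_min_iff] at ha hb
  simp only [List.getElem_zipWith]
  have hI := List.pairwise_iff_getElem.mp (pairwise_lt_sortedList I) a b ha.1 hb.1 hab
  have hJ := List.pairwise_iff_getElem.mp (pairwise_lt_sortedList J) a b ha.2 hb.2 hab
  omega

lemma card_fmin (I J : Finset ℕ) : (fmin I J).card = min I.card J.card := by
  rw [← length_sortedList, sortedList_fmin, List.length_zipWith, length_sortedList,
    length_sortedList]

lemma sortedNth_fmin (I J : Finset ℕ) (m : ℕ) :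
    sortedNth (fmin I J) m = min (sortedNth I m) (sortedNth J m) := by
  simp only [sortedNth, sortedList_fmin, List.getD_eq_getElem?_getD, List.getElem?_zipWith]
  cases (sortedList I)[m]? <;> cases (sortedList J)[m]? <;> simp

lemma fmin_subset_range (hI : I ⊆ Finset.range n) (J : Finset ℕ) : fmin I J ⊆ Finset.range n := by
  intro x hx
  obtain ⟨m, hm, rfl⟩ := List.mem_iff_getElem.mp
    (show x ∈ sortedList (fmin I J) from (Finset.mem_sort _).mpr hx)
  have hmI : m < I.card := by
    rw [length_sortedList, card_fmin] at hm
    omega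
  have := Finset.mem_range.mp (hI (sortedNth_mem hmI))
  rw [Finset.mem_range, ← sortedNth_eq_getElem, sortedNth_fmin]
  omega

lemma sortedNth_foldr_fmin {α : Type*} (L : List α) (f : α → Finset ℕ) (B : Finset ℕ) (m : ℕ) :
    sortedNth (L.foldr (fun a acc => fmin (f a) acc) B) m =
      L.foldr (fun a acc => min (sortedNth (f a) m) acc) (sortedNth B m) := by
  induction L with
  | nil => rfl
  | cons a L ih => rw [List.foldr_cons, List.foldr_cons, sortedNth_fmin, ih]

lemma card_foldr_fmin {α : Type*} (L : List α) (f : α → Finset ℕ) (B : Finset ℕ)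
    (hf : ∀ a ∈ L, (f a).card = B.card) :
    (L.foldr (fun a acc => fmin (f a) acc) B).card = B.card := by
  induction L with
  | nil => rfl
  | cons a L ih =>
    rw [List.foldr_cons, card_fmin, hf a List.mem_cons_self,
      ih fun b hb => hf b (List.mem_cons_of_mem a hb), min_self]

end SortedNth

section Iil

variable {n k i l m : ℕ}

lemma Iil_zero_zero (n k : ℕ) : Iil n k 0 0 = Finset.Ico (n - k) n := by
  unfold Iil
  split <;> simp

lemma sortedList_Iil (hlk : l ≤ k) (hkn : k ≤ n) (hli : l ≤ i) :
    sortedList (Iil n k i l) =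
      (List.range k).map fun m => if m < l ∧ i + k < n + l then i - l + m else n - k + m := by
  set g : ℕ → ℕ := fun m => if m < l ∧ i + k < n + l then i - l + m else n - k + m with hg
  have hmono : StrictMono g := fun a b hab => by
    simp only [hg]
    split_ifs <;> omega
  refine (congrArg sortedList ?_).trans
    (sortedList_toFinset (List.pairwise_lt_range.map g fun _ _ => (hmono ·)))
  ext x
  simp only [Iil, List.mem_toFinset, List.mem_map, List.mem_range, hg]
  split_ifs with hc
  · simp only [Finset.mem_union, Finset.mem_Ico]
    constructor
    · rintro (hx | hx)
      · exact ⟨x - (i - l), by omega, by rw [if_pos ⟨by omega, hc⟩]; omega⟩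
      · exact ⟨x - (n - k), by omega, by rw [if_neg (by omega)]; omega⟩
    · rintro ⟨m, hm, rfl⟩
      split_ifs <;> omega
  · simp only [Finset.mem_Ico, hc, and_false, if_false]
    constructor
    · exact fun hx => ⟨x - (n - k), by omega, by omega⟩
    · rintro ⟨m, hm, rfl⟩
      omega

lemma card_Iil (hlk : l ≤ k) (hkn : k ≤ n) (hli : l ≤ i) : (Iil n k i l).card = k := by
  rw [← length_sortedList, sortedList_Iil hlk hkn hli, List.length_map, List.length_range]

lemma sortedNth_Iil (hlk : l ≤ k) (hkn : k ≤ n) (hli : l ≤ i) (hm : m < k) :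
    sortedNth (Iil n k i l) m = if m < l ∧ i + k < n + l then i - l + m else n - k + m := by
  rw [sortedNth, sortedList_Iil hlk hkn hli, List.getD_eq_getElem _ _ (by simpa using hm)]
  simp

lemma fle_Iil_iff {I : Finset ℕ} (hI : I ⊆ Finset.range n) (hIk : I.card = k)
    (hl : 1 ≤ l) (hlk : l ≤ k) (hli : l ≤ i) :
    fle I (Iil n k i l) ↔ sortedNth I (l - 1) < i := by
  have hkn : k ≤ n := hIk ▸ (Finset.card_le_card hI).trans_eq (Finset.card_range n)
  rw [fle_iff_sortedNth, card_Iil hlk hkn hli, hIk, and_iff_right rfl]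
  constructor
  · intro h
    have hle := h (l - 1) (by omega)
    have htop := sortedNth_add_card_sub_le hI (m := l - 1) (by omega)
    rw [sortedNth_Iil hlk hkn hli (by omega)] at hle
    split_ifs at hle <;> omega
  · intro h m hm
    rw [sortedNth_Iil hlk hkn hli hm]
    split_ifs
    · have := sortedNth_add_le (I := I) (a := m) (b := l - 1 - m) (by omega)
      rw [Nat.add_sub_cancel' (by omega)] at this
      omega
    · have := sortedNth_add_card_sub_le hI (hIk ▸ hm)
      omega

lemma fle_fmin_Iil_iff {I J : Finset ℕ} (hI : I ⊆ Finset.range n) (hJ : J ⊆ Finset.range n)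
    (hIk : I.card = k) (hJk : J.card = k) (hl : 1 ≤ l) (hlk : l ≤ k) (hli : l ≤ i) :
    fle (fmin I J) (Iil n k i l) ↔ fle I (Iil n k i l) ∨ fle J (Iil n k i l) := by
  have hIJk : (fmin I J).card = k := by rw [card_fmin, hIk, hJk, min_self]
  rw [fle_Iil_iff (fmin_subset_range hI J) hIJk hl hlk hli, fle_Iil_iff hI hIk hl hlk hli,
    fle_Iil_iff hJ hJk hl hlk hli, sortedNth_fmin, min_lt_iff]

lemma fle_Iil_pred {i₀ l₀ : ℕ} (hkn : k ≤ n) (hl₀ : 1 ≤ l₀) (hl₀k : l₀ ≤ k) (hl₀i : l₀ ≤ i₀)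
    (hl : 1 ≤ l) (hlk : l ≤ k) (hli : l ≤ i) (h : fle (Iil n k i₀ l₀) (Iil n k i l)) :
    fle (Iil n k i₀ (l₀ - 1)) (Iil n k i (l - 1)) := by
  rw [fle_iff_sortedNth, card_Iil hl₀k hkn hl₀i] at h
  rw [fle_iff_sortedNth, card_Iil (by omega) hkn (by omega), card_Iil (by omega) hkn (by omega)]
  refine ⟨rfl, fun m hm => ?_⟩
  have hle := h.2 (l - 1) (by omega)
  rw [sortedNth_Iil hl₀k hkn hl₀i (by omega), sortedNth_Iil hlk hkn hli (by omega)] at hle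
  rw [sortedNth_Iil (by omega) hkn (by omega) hm, sortedNth_Iil (by omega) hkn (by omega) hm]
  split_ifs at hle ⊢ <;> omega


end Iil

section Shift

variable {n k : ℕ}

noncomputable def shiftIndex (n k : ℕ) (I : Finset ℕ) : Finset (ℕ × ℕ) :=
  (Finset.range n ×ˢ Finset.range (k + 1)).filter
    (fun p => 1 ≤ p.2 ∧ p.2 ≤ min k p.1 ∧ fle I (Iil n k p.1 p.2))

lemma mem_shiftIndex {I : Finset ℕ} {i l : ℕ} :
    (i, l) ∈ shiftIndex n k I ↔ i < n ∧ 1 ≤ l ∧ l ≤ k ∧ l ≤ i ∧ fle I (Iil n k i l) := by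
  simp only [shiftIndex, Finset.mem_filter, Finset.mem_product, Finset.mem_range, le_min_iff,
    Nat.lt_succ_iff]
  tauto

lemma shift_eq_foldr (n k : ℕ) (I : Finset ℕ) :
    shift n k I = (shiftIndex n k I).toList.foldr
      (fun p acc => fmin (Iil n k p.1 (p.2 - 1)) acc) (Finset.Ico (n - k) n) :=
  rfl

lemma sortedNth_shift (n k : ℕ) (I : Finset ℕ) (m : ℕ) :
    sortedNth (shift n k I) m = (shiftIndex n k I).fold min (sortedNth (Finset.Ico (n - k) n) m)
      fun p => sortedNth (Iil n k p.1 (p.2 - 1)) m := by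
  rw [shift_eq_foldr, sortedNth_foldr_fmin, Finset.foldr_toList_eq_fold]

lemma card_shift (hkn : k ≤ n) (I : Finset ℕ) : (shift n k I).card = k := by
  have hbase : (Finset.Ico (n - k) n).card = k := by
    rw [Nat.card_Ico]
    omega
  rw [shift_eq_foldr, card_foldr_fmin _ _ _ fun p hp => ?_, hbase]
  obtain ⟨-, -, hlk, hli, -⟩ := mem_shiftIndex.mp (Finset.mem_toList.mp hp)
  rw [hbase]
  exact card_Iil (by omega) hkn (by omega)

lemma shiftIndex_fmin {I J : Finset ℕ} (hI : I ⊆ Finset.range n) (hJ : J ⊆ Finset.range n)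
    (hIk : I.card = k) (hJk : J.card = k) :
    shiftIndex n k (fmin I J) = shiftIndex n k I ∪ shiftIndex n k J := by
  ext ⟨i, l⟩
  simp only [Finset.mem_union, mem_shiftIndex]
  constructor
  · rintro ⟨hin, hl, hlk, hli, h⟩
    rcases (fle_fmin_Iil_iff hI hJ hIk hJk hl hlk hli).mp h with h | h
    exacts [Or.inl ⟨hin, hl, hlk, hli, h⟩, Or.inr ⟨hin, hl, hlk, hli, h⟩]
  · rintro (⟨hin, hl, hlk, hli, h⟩ | ⟨hin, hl, hlk, hli, h⟩) <;>
      exact ⟨hin, hl, hlk, hli, (fle_fmin_Iil_iff hI hJ hIk hJk hl hlk hli).mpr (by tauto)⟩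

theorem shift_fmin {I J : Finset ℕ} (hI : I ⊆ Finset.range n) (hJ : J ⊆ Finset.range n)
    (hIk : I.card = k) (hJk : J.card = k) :
    shift n k (fmin I J) = fmin (shift n k I) (shift n k J) := by
  have hkn : k ≤ n := hIk ▸ (Finset.card_le_card hI).trans_eq (Finset.card_range n)
  refine eq_of_sortedNth_eq (by simp only [card_fmin, card_shift hkn, min_self]) fun m _ => ?_
  rw [sortedNth_fmin, sortedNth_shift, sortedNth_shift, sortedNth_shift,
    shiftIndex_fmin hI hJ hIk hJk, Finset.fold_min_union]

theorem shift_Iil {i₀ l₀ : ℕ} (hkn : k ≤ n) (hi₀ : i₀ < n) (hl₀ : 1 ≤ l₀) (hl₀k : l₀ ≤ k)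
    (hl₀i : l₀ ≤ i₀) : shift n k (Iil n k i₀ l₀) = Iil n k i₀ (l₀ - 1) := by
  refine eq_of_sortedNth_eq (by rw [card_shift hkn, card_Iil (by omega) hkn (by omega)])
    fun m hm => ?_
  rw [card_shift hkn] at hm
  rw [sortedNth_shift]
  refine le_antisymm ((Finset.fold_min_le _).mpr (Or.inr ⟨(i₀, l₀), ?_, le_rfl⟩))
    ((Finset.le_fold_min _).mpr ⟨?_, ?_⟩)
  · exact mem_shiftIndex.mpr ⟨hi₀, hl₀, hl₀k, hl₀i, fle_refl _⟩
  · rw [← Iil_zero_zero, sortedNth_Iil (Nat.zero_le k) hkn le_rfl hm,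
      sortedNth_Iil (by omega) hkn (by omega) hm]
    split_ifs <;> omega
  · rintro ⟨i, l⟩ hp
    obtain ⟨-, hl, hlk, hli, h⟩ := mem_shiftIndex.mp hp
    refine (fle_iff_sortedNth.mp (fle_Iil_pred hkn hl₀ hl₀k hl₀i hl hlk hli h)).2 m ?_
    rwa [card_Iil (by omega) hkn (by omega)]

end Shift

theorem stmt19_general (n k : ℕ) (hkn : k ≤ n) :
    (∀ I J : Finset ℕ, I ⊆ Finset.range n → J ⊆ Finset.range n →
      I.card = k → J.card = k →
      shift n k (fmin I J) = fmin (shift n k I) (shift n k J))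
    ∧ ∀ i0 l0 : ℕ, i0 < n → 0 < l0 → l0 ≤ k → l0 ≤ i0 →
        shift n k (Iil n k i0 l0) = Iil n k i0 (l0 - 1) :=
  ⟨fun _ _ hI hJ hIk hJk => shift_fmin hI hJ hIk hJk,
    fun _ _ hi₀ hl₀ hl₀k hl₀i => shift_Iil hkn hi₀ hl₀ hl₀k hl₀i⟩

/-- The shift is compatible with componentwise minima: `min{I,J}[1] = min{I[1], J[1]}` for
all `k`-subsets `I, J` of `{0,…,n-1}`; moreover on the special subsets the shift simply
decreases the parameter: `I_{i₀}^{l₀}[1] = I_{i₀}^{l₀-1}` for all `0 < l₀ ≤ min{k, i₀}`. -/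
theorem stmt19 (n k : ℕ) (hk : 0 < k) (hkn : k ≤ n) :
    (∀ I J : Finset ℕ, I ⊆ Finset.range n → J ⊆ Finset.range n →
      I.card = k → J.card = k →
      shift n k (fmin I J) = fmin (shift n k I) (shift n k J))
    ∧ ∀ i0 l0 : ℕ, i0 < n → 0 < l0 → l0 ≤ k → l0 ≤ i0 →
        shift n k (Iil n k i0 l0) = Iil n k i0 (l0 - 1) :=
  stmt19_general n k hkn
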